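/- arXiv:1903.01032 — 2 statements merged into one kernel-verified Lean document; each statement's English description precedes it below -/
import Mathlib

section
/- The function S(r) = (log r)/(r − 1) · r^{−r/(r−1)} is strictly decreasing for r > 1. -/
open Real Set

lemma log_gt_aux (x : ℝ) (hx : 1 < x) : 1 - x⁻¹ < Real.log x := by
  have h := Real.log_lt_sub_one_of_pos (x := x⁻¹) (by positivity)
    (by intro h; rw [inv_eq_one] at h; linarith)
  rw [Real.log_inv] at h
  linarith

lemma f_hasDeriv (x : ℝ) (hx : 1 < x) :
    HasDerivAt (fun y => Real.log y / (y - 1))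
      ((x⁻¹ * (x - 1) - Real.log x * 1) / (x - 1) ^ 2) x :=
  (Real.hasDerivAt_log (by linarith)).div ((hasDerivAt_id x).sub_const 1) (by simp only [id_eq, sub_ne_zero]; intro h; linarith)

lemma h_hasDeriv (x : ℝ) (hx : 1 < x) :
    HasDerivAt (fun y => y / (y - 1) * Real.log y)
      ((1 * (x - 1) - x * 1) / (x - 1) ^ 2 * Real.log x + x / (x - 1) * x⁻¹) x :=
  (((hasDerivAt_id x).div ((hasDerivAt_id x).sub_const 1) (by simp only [id_eq, sub_ne_zero]; intro h; linarith))).mul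
    (Real.hasDerivAt_log (by linarith))

lemma f_anti : StrictAntiOn (fun y => Real.log y / (y - 1)) (Set.Ioi 1) := by
  apply strictAntiOn_of_deriv_neg (convex_Ioi 1)
  · exact fun x hx => ((f_hasDeriv x hx).differentiableAt.continuousAt).continuousWithinAt
  · rw [interior_Ioi]
    intro x hx
    rw [(f_hasDeriv x hx).deriv]
    have hx' : (1:ℝ) < x := hx
    have h1 : 1 - x⁻¹ < Real.log x := log_gt_aux x hx'
    have h2 : x⁻¹ * (x - 1) = 1 - x⁻¹ := by field_simp
    apply div_neg_of_neg_of_pos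
    · nlinarith
    · nlinarith

lemma h_mono : StrictMonoOn (fun y => y / (y - 1) * Real.log y) (Set.Ioi 1) := by
  apply StrictMonoOn.mono (s := Set.Ioi 1)
  · apply strictMonoOn_of_deriv_pos (convex_Ioi 1)
    · exact fun x hx => ((h_hasDeriv x hx).differentiableAt.continuousAt).continuousWithinAt
    · rw [interior_Ioi]
      intro x hx
      rw [(h_hasDeriv x hx).deriv]
      have hx' : (1:ℝ) < x := hx
      have h1 : Real.log x < x - 1 := Real.log_lt_sub_one_of_pos (by linarith) (by linarith)
      have hx0 : x ≠ 0 := by linarith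
      have hx1 : x - 1 ≠ 0 := by intro h; linarith
      have key : (1 * (x - 1) - x * 1) / (x - 1) ^ 2 * Real.log x + x / (x - 1) * x⁻¹
          = (x - 1 - Real.log x) / (x - 1) ^ 2 := by field_simp; ring
      rw [key]
      exact div_pos (by linarith) (by positivity)
  · exact le_refl _

/-- S(r) = (log r)/(r−1)·r^{−r/(r−1)} is strictly decreasing for
r > 1. -/
theorem stmt11 :
    ∀ r1 r2 : ℝ, 1 < r1 → r1 < r2 →
      Real.log r2 / (r2 - 1) * r2 ^ (-(r2 / (r2 - 1)))
        < Real.log r1 / (r1 - 1) * r1 ^ (-(r1 / (r1 - 1))) := by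
  intro r1 r2 h1 h12
  have h2 : 1 < r2 := h1.trans h12
  have hf : Real.log r2 / (r2 - 1) < Real.log r1 / (r1 - 1) :=
    f_anti (Set.mem_Ioi.mpr h1) (Set.mem_Ioi.mpr h2) h12
  have hh : r1 / (r1 - 1) * Real.log r1 < r2 / (r2 - 1) * Real.log r2 :=
    h_mono (Set.mem_Ioi.mpr h1) (Set.mem_Ioi.mpr h2) h12
  rw [Real.rpow_def_of_pos (by linarith), Real.rpow_def_of_pos (by linarith)]
  have e1 : Real.log r1 * (-(r1 / (r1 - 1))) = -(r1 / (r1 - 1) * Real.log r1) := by ring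
  have e2 : Real.log r2 * (-(r2 / (r2 - 1))) = -(r2 / (r2 - 1) * Real.log r2) := by ring
  rw [e1, e2]
  have hexp : Real.exp (-(r2 / (r2 - 1) * Real.log r2)) < Real.exp (-(r1 / (r1 - 1) * Real.log r1)) :=
    Real.exp_lt_exp.mpr (by linarith)
  have hpos : 0 ≤ Real.log r2 / (r2 - 1) :=
    div_nonneg (Real.log_pos h2).le (by linarith)
  exact mul_lt_mul'' hf hexp hpos (Real.exp_nonneg _)
end

section
/- For exponential hypothesis testing with equal priors and fixed λ0 > 0, along the family of optimal ML classifiers parametrized by r = λ1/λ0 > 1, the accuracy A(r) = 1/2 + (1/2)(r−1)r^{−r/(r−1)} is strictly increasing and the sensitivity S(r) = (log r)/(2λ0(r−1))·r^{−r/(r−1)} is strictly decreasing; hence sensitivity is a strictly decreasing function of accuracy. -/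
open Real Set

private lemma log_div_lt_one' {r : ℝ} (hr : 1 < r) : Real.log r / (r - 1) < 1 := by
  rw [div_lt_one (by linarith)]
  exact Real.log_lt_sub_one_of_pos (by linarith) (by linarith)

private lemma log_div_pos' {r : ℝ} (hr : 1 < r) : 0 < Real.log r / (r - 1) :=
  div_pos (Real.log_pos hr) (by linarith)

private lemma logdiv_anti' : StrictAntiOn (fun r : ℝ => Real.log r / (r - 1)) (Set.Ioi 1) := by
  apply strictAntiOn_of_deriv_neg (convex_Ioi 1)
  · apply ContinuousOn.div
    · exact Real.continuousOn_log.mono (by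
        intro x hx
        simp only [Set.mem_Ioi, Set.mem_compl_iff, Set.mem_singleton_iff] at *
        linarith)
    · fun_prop
    · intro x hx
      simp only [Set.mem_Ioi] at hx
      intro h
      have : x = 1 := by linarith [sub_eq_zero.mp h]
      linarith
  · intro x hx
    rw [interior_Ioi] at hx
    simp only [Set.mem_Ioi] at hx
    have hx0 : (0:ℝ) < x := by linarith
    have hne : x - 1 ≠ 0 := by intro h; linarith [sub_eq_zero.mp h]
    have hd : HasDerivAt (fun r : ℝ => Real.log r / (r - 1))
        ((x⁻¹ * (x - 1) - Real.log x * 1) / (x - 1)^2) x :=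
      (Real.hasDerivAt_log (ne_of_gt hx0)).div ((hasDerivAt_id x).sub_const 1) hne
    rw [hd.deriv]
    apply div_neg_of_neg_of_pos
    · have h1 : 1 - x⁻¹ < Real.log x := by
        have h2 := Real.log_lt_sub_one_of_pos (x := x⁻¹) (by positivity)
          (by intro h; rw [inv_eq_one] at h; linarith)
        rw [Real.log_inv] at h2
        linarith
      have hxinv : x⁻¹ * (x - 1) = 1 - x⁻¹ := by field_simp
      rw [hxinv]
      linarith
    · positivity

private lemma texp_mono' : StrictMonoOn (fun t : ℝ => t * Real.exp (-t)) (Set.Icc 0 1) := by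
  apply strictMonoOn_of_deriv_pos (convex_Icc 0 1) (by fun_prop)
  intro x hx
  rw [interior_Icc] at hx
  have hd : HasDerivAt (fun t : ℝ => t * Real.exp (-t))
      (1 * Real.exp (-x) + x * (Real.exp (-x) * (-1))) x := by
    have he : HasDerivAt (fun t : ℝ => Real.exp (-t)) (Real.exp (-x) * (-1)) x :=
      (Real.hasDerivAt_exp (-x)).comp x (hasDerivAt_neg x)
    exact (hasDerivAt_id x).mul he
  rw [hd.deriv]
  have h1 : 0 < (1 - x) * Real.exp (-x) := mul_pos (by linarith [hx.2]) (Real.exp_pos _)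
  nlinarith [Real.exp_pos (-x)]

private lemma rpow_eq' {r : ℝ} (hr : 1 < r) :
    r ^ (-(r / (r - 1))) = Real.exp (-(Real.log r / (r - 1))) / r := by
  have hr0 : 0 < r := by linarith
  have hne : r - 1 ≠ 0 := by intro h; linarith [sub_eq_zero.mp h]
  rw [Real.rpow_def_of_pos hr0]
  have key : Real.log r * -(r / (r - 1)) = -(Real.log r / (r - 1)) + -Real.log r := by
    field_simp
    ring
  rw [key, Real.exp_add,
    show Real.exp (-Real.log r) = r⁻¹ by rw [Real.exp_neg, Real.exp_log hr0]]
  ring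

/-- along the family of optimal ML classifiers for exponential
testing parametrized by r = λ1/λ0 > 1, accuracy is strictly increasing and
sensitivity strictly decreasing; hence sensitivity is a strictly decreasing
function of accuracy. -/
theorem stmt12 (l0 : ℝ) (h0 : 0 < l0) :
    ∀ r1 r2 : ℝ, 1 < r1 → r1 < r2 →
      ((1/2 : ℝ) + (1/2) * (r1 - 1) * r1 ^ (-(r1 / (r1 - 1)))
          < 1/2 + (1/2) * (r2 - 1) * r2 ^ (-(r2 / (r2 - 1))))
      ∧ (Real.log r2 / (2 * l0 * (r2 - 1)) * r2 ^ (-(r2 / (r2 - 1)))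
          < Real.log r1 / (2 * l0 * (r1 - 1)) * r1 ^ (-(r1 / (r1 - 1)))) := by
  intro r1 r2 h1 h12
  have h2 : 1 < r2 := h1.trans h12
  have hr10 : (0:ℝ) < r1 := by linarith
  have hr20 : (0:ℝ) < r2 := by linarith
  have ht : Real.log r2 / (r2 - 1) < Real.log r1 / (r1 - 1) :=
    logdiv_anti' (Set.mem_Ioi.mpr h1) (Set.mem_Ioi.mpr h2) h12
  have ht1pos := log_div_pos' h1
  have ht2pos := log_div_pos' h2
  have ht1lt := log_div_lt_one' h1
  have ht2lt := log_div_lt_one' h2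
  rw [rpow_eq' h1, rpow_eq' h2]
  constructor
  · have f1 : (r1 - 1) / r1 < (r2 - 1) / r2 := by
      rw [div_lt_div_iff₀ hr10 hr20]; nlinarith
    have f2 : Real.exp (-(Real.log r1 / (r1 - 1))) < Real.exp (-(Real.log r2 / (r2 - 1))) :=
      Real.exp_lt_exp.mpr (by linarith)
    have key : (r1 - 1) * (Real.exp (-(Real.log r1 / (r1 - 1))) / r1)
        < (r2 - 1) * (Real.exp (-(Real.log r2 / (r2 - 1))) / r2) := by
      calc (r1 - 1) * (Real.exp (-(Real.log r1 / (r1 - 1))) / r1)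
          = (r1 - 1) / r1 * Real.exp (-(Real.log r1 / (r1 - 1))) := by ring
        _ < (r2 - 1) / r2 * Real.exp (-(Real.log r2 / (r2 - 1))) :=
            mul_lt_mul'' f1 f2 (div_nonneg (by linarith) (by linarith)) (Real.exp_pos _).le
        _ = (r2 - 1) * (Real.exp (-(Real.log r2 / (r2 - 1))) / r2) := by ring
    linarith
  · have g : (Real.log r2 / (r2 - 1)) * Real.exp (-(Real.log r2 / (r2 - 1)))
        < (Real.log r1 / (r1 - 1)) * Real.exp (-(Real.log r1 / (r1 - 1))) :=
      texp_mono' ⟨ht2pos.le, ht2lt.le⟩ ⟨ht1pos.le, ht1lt.le⟩ ht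
    have h5 : (Real.log r2 / (r2 - 1)) * Real.exp (-(Real.log r2 / (r2 - 1))) / r2
        < (Real.log r1 / (r1 - 1)) * Real.exp (-(Real.log r1 / (r1 - 1))) / r1 := by
      rw [div_lt_div_iff₀ hr20 hr10]
      have hp : 0 < (Real.log r1 / (r1 - 1)) * Real.exp (-(Real.log r1 / (r1 - 1))) :=
        mul_pos ht1pos (Real.exp_pos _)
      nlinarith
    have eqS : ∀ r : ℝ, 1 < r →
        Real.log r / (2 * l0 * (r - 1)) * (Real.exp (-(Real.log r / (r - 1))) / r)
        = (Real.log r / (r - 1)) * Real.exp (-(Real.log r / (r - 1))) / r / (2 * l0) := by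
      intro r hr
      have hne : r - 1 ≠ 0 := by intro h; linarith [sub_eq_zero.mp h]
      have hr0 : (0:ℝ) < r := by linarith
      rw [div_mul_div_comm, div_div]
      rw [div_mul_eq_mul_div, div_div]
      congr 1
      ring
    rw [eqS r1 h1, eqS r2 h2]
    have h2l0 : (0:ℝ) < 2 * l0 := by linarith
    exact div_lt_div_of_pos_right h5 h2l0
end
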